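/- arXiv:1602.07398 — 2 statements merged into one kernel-verified Lean document; each statement's English description precedes it below -/
import Mathlib

section
/- The steady-state mean BVP of the insect-respiration model has at most one solution: if v₀, v₁ satisfy the ODE system and all four boundary conditions, then for every x ∈ [0, L] one has v₀(x) = m·(ρ·x + (1−ρ)·sinh(γx)/(γ·cosh(γL))) and v₁(x) = m·(1−ρ)·(x − sinh(γx)/(γ·cosh(γL))), where m = ρ·c/(ρ·L + (1−ρ)·tanh(γL)/γ). -/
/-!
The total density `v₀ + v₁` satisfies `S'' = 0` and the exchange term `Q = β v₀ - α v₁`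
satisfies `Q'' = γ² Q`; both vanish at `0`, so `S = A x` and `γ Q = B sinh (γ x)`. The boundary
condition `v₁'(L) = 0` gives `B cosh (γ L) = β A`, which expresses `v₀ = (α S + Q) / (α + β)` and
`v₁ = (β S - Q) / (α + β)` through `A` alone, and `v₀(L) = ρ c` then forces `A = m`.
-/

open Set Real

theorem eq_left_of_hasDerivAt_zero {g : ℝ → ℝ} {a b : ℝ}
    (hg : ∀ x ∈ Icc a b, HasDerivAt g 0 x) : ∀ x ∈ Icc a b, g x = g a :=
  constant_of_has_deriv_right_zero (fun x hx => (hg x hx).continuousAt.continuousWithinAt)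
    fun x hx => (hg x (Ico_subset_Icc_self hx)).hasDerivWithinAt

theorem ContDiffOn.hasDerivAt_and_hasDerivAt_deriv {f : ℝ → ℝ} {s : Set ℝ} {x : ℝ}
    (hf : ContDiffOn ℝ 2 f s) (hs : IsOpen s) (hx : x ∈ s) :
    HasDerivAt f (deriv f x) x ∧ HasDerivAt (deriv f) (deriv (deriv f) x) x :=
  ⟨(hf.differentiableOn two_ne_zero).hasDerivAt (hs.mem_nhds hx),
    ((hf.deriv_of_isOpen hs (m := 1) (by norm_num)).differentiableOn one_ne_zero).hasDerivAt
      (hs.mem_nhds hx)⟩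

section SecondOrder

variable {f f' : ℝ → ℝ} {k L : ℝ}

/-- `exp (-k x)` is an integrating factor for `(d/dx - k) (f' + k f) = 0`. -/
theorem add_mul_mul_exp_neg_eq_of_hasDerivAt_sq_mul
    (hf : ∀ x ∈ Icc 0 L, HasDerivAt f (f' x) x)
    (hf' : ∀ x ∈ Icc 0 L, HasDerivAt f' (k ^ 2 * f x) x) :
    ∀ x ∈ Icc 0 L, (f' x + k * f x) * exp (-(k * x)) = f' 0 + k * f 0 := by
  have hconst := eq_left_of_hasDerivAt_zero (g := fun x => (f' x + k * f x) * exp (-(k * x)))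
    fun x hx => by
      refine (((hf' x hx).add ((hf x hx).const_mul k)).mul
        ((hasDerivAt_id' x).const_mul k).neg.exp).congr_deriv ?_
      simp only [Pi.neg_apply, Pi.add_apply]
      ring
  simpa using hconst

theorem cosh_sinh_of_hasDerivAt_sq_mul (hf : ∀ x ∈ Icc 0 L, HasDerivAt f (f' x) x)
    (hf' : ∀ x ∈ Icc 0 L, HasDerivAt f' (k ^ 2 * f x) x) (h0 : f 0 = 0) :
    ∀ x ∈ Icc 0 L, f' x = f' 0 * cosh (k * x) ∧ k * f x = f' 0 * sinh (k * x) := by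
  intro x hx
  have hplus := add_mul_mul_exp_neg_eq_of_hasDerivAt_sq_mul hf hf' x hx
  have hminus := add_mul_mul_exp_neg_eq_of_hasDerivAt_sq_mul (k := -k) hf (by simpa using hf') x hx
  have hprod : exp (k * x) * exp (-(k * x)) = 1 := by rw [← exp_add, add_neg_cancel, exp_zero]
  simp only [h0, mul_zero, add_zero, neg_mul, neg_neg] at hplus hminus
  rw [cosh_eq, sinh_eq]
  constructor
  · linear_combination (exp (k * x) * hplus + exp (-(k * x)) * hminus) / 2 - f' x * hprod
  · linear_combination (exp (k * x) * hplus - exp (-(k * x)) * hminus) / 2 - k * f x * hprod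

theorem eq_mul_of_hasDerivAt_zero (hf : ∀ x ∈ Icc 0 L, HasDerivAt f (f' x) x)
    (hf' : ∀ x ∈ Icc 0 L, HasDerivAt f' 0 x) (h0 : f 0 = 0) :
    ∀ x ∈ Icc 0 L, f' x = f' 0 ∧ f x = f' 0 * x := by
  have hderiv : ∀ x ∈ Icc 0 L, f' x = f' 0 := eq_left_of_hasDerivAt_zero hf'
  have hlin := eq_left_of_hasDerivAt_zero (g := fun x => f x - f' 0 * x) fun x hx => by
    refine ((hf x hx).sub ((hasDerivAt_id' x).const_mul (f' 0))).congr_deriv ?_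
    rw [hderiv x hx, mul_one, sub_self]
  intro x hx
  exact ⟨hderiv x hx, by simpa [h0, sub_eq_zero] using hlin x hx⟩

end SecondOrder

section MeanSystem

variable {D α β γ L : ℝ} {v₀ v₁ : ℝ → ℝ}

theorem total_eq_mul (hD : D ≠ 0)
    (hv₀ : ∀ x ∈ Icc 0 L, HasDerivAt v₀ (deriv v₀ x) x ∧
      HasDerivAt (deriv v₀) (deriv (deriv v₀) x) x)
    (hv₁ : ∀ x ∈ Icc 0 L, HasDerivAt v₁ (deriv v₁ x) x ∧
      HasDerivAt (deriv v₁) (deriv (deriv v₁) x) x)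
    (hode0 : ∀ x ∈ Icc 0 L, D * deriv (deriv v₀) x = β * v₀ x - α * v₁ x)
    (hode1 : ∀ x ∈ Icc 0 L, D * deriv (deriv v₁) x = α * v₁ x - β * v₀ x)
    (h₀ : v₀ 0 = 0) (h₁ : v₁ 0 = 0) :
    ∀ x ∈ Icc 0 L, deriv v₀ x + deriv v₁ x = deriv v₀ 0 + deriv v₁ 0 ∧
      v₀ x + v₁ x = (deriv v₀ 0 + deriv v₁ 0) * x :=
  eq_mul_of_hasDerivAt_zero (fun x hx => (hv₀ x hx).1.add (hv₁ x hx).1)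
    (fun x hx => ((hv₀ x hx).2.add (hv₁ x hx).2).congr_deriv <|
      mul_left_cancel₀ hD (by linear_combination hode0 x hx + hode1 x hx))
    (by simp [h₀, h₁])

theorem exchange_eq_sinh (hD : D ≠ 0) (hγ : γ ^ 2 * D = α + β)
    (hv₀ : ∀ x ∈ Icc 0 L, HasDerivAt v₀ (deriv v₀ x) x ∧
      HasDerivAt (deriv v₀) (deriv (deriv v₀) x) x)
    (hv₁ : ∀ x ∈ Icc 0 L, HasDerivAt v₁ (deriv v₁ x) x ∧
      HasDerivAt (deriv v₁) (deriv (deriv v₁) x) x)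
    (hode0 : ∀ x ∈ Icc 0 L, D * deriv (deriv v₀) x = β * v₀ x - α * v₁ x)
    (hode1 : ∀ x ∈ Icc 0 L, D * deriv (deriv v₁) x = α * v₁ x - β * v₀ x)
    (h₀ : v₀ 0 = 0) (h₁ : v₁ 0 = 0) :
    ∀ x ∈ Icc 0 L,
      β * deriv v₀ x - α * deriv v₁ x = (β * deriv v₀ 0 - α * deriv v₁ 0) * cosh (γ * x) ∧
      γ * (β * v₀ x - α * v₁ x) = (β * deriv v₀ 0 - α * deriv v₁ 0) * sinh (γ * x) :=
  cosh_sinh_of_hasDerivAt_sq_mul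
    (fun x hx => ((hv₀ x hx).1.const_mul β).sub ((hv₁ x hx).1.const_mul α))
    (fun x hx => (((hv₀ x hx).2.const_mul β).sub ((hv₁ x hx).2.const_mul α)).congr_deriv <|
      mul_left_cancel₀ hD (by
        linear_combination β * hode0 x hx - α * hode1 x hx - (β * v₀ x - α * v₁ x) * hγ))
    (by simp [h₀, h₁])

end MeanSystem

theorem profile_of_total_of_exchange {α β γ L ρ A B x s₀ s₁ : ℝ} (hαβ : α + β ≠ 0)
    (hγ : γ ≠ 0) (hρ : ρ = α / (α + β)) (hBA : B * cosh (γ * L) = β * A)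
    (htotal : s₀ + s₁ = A * x) (hexchange : γ * (β * s₀ - α * s₁) = B * sinh (γ * x)) :
    s₀ = A * (ρ * x + (1 - ρ) * sinh (γ * x) / (γ * cosh (γ * L))) ∧
      s₁ = A * (1 - ρ) * (x - sinh (γ * x) / (γ * cosh (γ * L))) := by
  have hC := (cosh_pos (γ * L)).ne'
  subst hρ
  constructor
  · field_simp
    rw [mul_comm x γ]
    linear_combination α * γ * cosh (γ * L) * htotal + cosh (γ * L) * hexchange +
      sinh (γ * x) * hBA
  · field_simp
    rw [mul_comm x γ]
    linear_combination β * γ * cosh (γ * L) * htotal - cosh (γ * L) * hexchange -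
      sinh (γ * x) * hBA

theorem insect_bvp_uniqueness_general
    (L D α β c ρ γ m : ℝ) (hL : 0 < L) (hD : 0 < D) (hα : 0 < α) (hβ : 0 < β)
    (hρ : ρ = α / (α + β)) (hγ : γ = Real.sqrt ((α + β) / D))
    (hm : m = ρ * c / (ρ * L + (1 - ρ) * Real.tanh (γ * L) / γ))
    (v₀ v₁ : ℝ → ℝ) (a b : ℝ) (ha : a < 0) (hb : L < b)
    (hreg0 : ContDiffOn ℝ 2 v₀ (Set.Ioo a b))
    (hreg1 : ContDiffOn ℝ 2 v₁ (Set.Ioo a b))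
    (hode0 : ∀ x ∈ Set.Icc (0:ℝ) L, D * deriv (deriv v₀) x = β * v₀ x - α * v₁ x)
    (hode1 : ∀ x ∈ Set.Icc (0:ℝ) L, D * deriv (deriv v₁) x = α * v₁ x - β * v₀ x)
    (hbc0 : v₀ 0 = 0) (hbc1 : v₁ 0 = 0)
    (hbc2 : deriv v₁ L = 0) (hbc3 : v₀ L = c * α / (α + β)) :
    ∀ x ∈ Set.Icc (0:ℝ) L,
      v₀ x = m * (ρ * x + (1 - ρ) * Real.sinh (γ * x) / (γ * Real.cosh (γ * L))) ∧
      v₁ x = m * (1 - ρ) * (x - Real.sinh (γ * x) / (γ * Real.cosh (γ * L))) := by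
  have hαβ : 0 < α + β := by positivity
  have hγpos : 0 < γ := hγ ▸ sqrt_pos.2 (div_pos hαβ hD)
  have hγsq : γ ^ 2 * D = α + β := by
    rw [hγ, sq_sqrt (div_pos hαβ hD).le, div_mul_cancel₀ _ hD.ne']
  have hsub : Icc 0 L ⊆ Ioo a b := Icc_subset_Ioo ha hb
  have hv₀ x (hx : x ∈ Icc 0 L) := hreg0.hasDerivAt_and_hasDerivAt_deriv isOpen_Ioo (hsub hx)
  have hv₁ x (hx : x ∈ Icc 0 L) := hreg1.hasDerivAt_and_hasDerivAt_deriv isOpen_Ioo (hsub hx)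
  have htotal := total_eq_mul hD.ne' hv₀ hv₁ hode0 hode1 hbc0 hbc1
  have hexchange := exchange_eq_sinh hD.ne' hγsq hv₀ hv₁ hode0 hode1 hbc0 hbc1
  have hLmem : L ∈ Icc 0 L := right_mem_Icc.2 hL.le
  have hBA : (β * deriv v₀ 0 - α * deriv v₁ 0) * cosh (γ * L) =
      β * (deriv v₀ 0 + deriv v₁ 0) := by
    linear_combination -(hexchange L hLmem).1 + β * (htotal L hLmem).1 - (α + β) * hbc2
  have hprofile x (hx : x ∈ Icc 0 L) := profile_of_total_of_exchange hαβ.ne' hγpos.ne' hρ hBA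
    (htotal x hx).2 (hexchange x hx).2
  have hAm : deriv v₀ 0 + deriv v₁ 0 = m := by
    have hsinh := sinh_pos_iff.2 (mul_pos hγpos hL)
    have hρ₁ : 1 - ρ = β / (α + β) := by rw [hρ]; field_simp; ring
    have hden : 0 < ρ * L + (1 - ρ) * tanh (γ * L) / γ := by
      rw [hρ₁, tanh_eq_sinh_div_cosh, hρ]; positivity
    have hρc : c * α / (α + β) = ρ * c := by rw [hρ]; ring
    rw [hm, eq_div_iff hden.ne', ← hρc, ← hbc3, (hprofile L hLmem).1, tanh_eq_sinh_div_cosh]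
    ring
  intro x hx
  simpa only [← hAm] using hprofile x hx

/-- Uniqueness for the steady-state mean BVP of the insect-respiration
model: any solution equals the explicit one. -/
theorem insect_bvp_uniqueness
    (L D α β c ρ γ m : ℝ) (hL : 0 < L) (hD : 0 < D) (hα : 0 < α) (hβ : 0 < β) (hc : 0 < c)
    (hρ : ρ = α / (α + β)) (hγ : γ = Real.sqrt ((α + β) / D))
    (hm : m = ρ * c / (ρ * L + (1 - ρ) * Real.tanh (γ * L) / γ))
    (v₀ v₁ : ℝ → ℝ) (a b : ℝ) (ha : a < 0) (hb : L < b)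
    (hreg0 : ContDiffOn ℝ 2 v₀ (Set.Ioo a b))
    (hreg1 : ContDiffOn ℝ 2 v₁ (Set.Ioo a b))
    (hode0 : ∀ x ∈ Set.Icc (0:ℝ) L, D * deriv (deriv v₀) x = β * v₀ x - α * v₁ x)
    (hode1 : ∀ x ∈ Set.Icc (0:ℝ) L, D * deriv (deriv v₁) x = α * v₁ x - β * v₀ x)
    (hbc0 : v₀ 0 = 0) (hbc1 : v₁ 0 = 0)
    (hbc2 : deriv v₁ L = 0) (hbc3 : v₀ L = c * α / (α + β)) :
    ∀ x ∈ Set.Icc (0:ℝ) L,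
      v₀ x = m * (ρ * x + (1 - ρ) * Real.sinh (γ * x) / (γ * Real.cosh (γ * L))) ∧
      v₁ x = m * (1 - ρ) * (x - Real.sinh (γ * x) / (γ * Real.cosh (γ * L))) :=
  insect_bvp_uniqueness_general L D α β c ρ γ m hL hD hα hβ hρ hγ hm v₀ v₁ a b ha hb hreg0 hreg1
    hode0 hode1 hbc0 hbc1 hbc2 hbc3
end

section
/- The steady-state mean oxygen flux is strictly increasing in the total switching rate: if 0 < r₁ < r₂, if (v₀, v₁) solves the insect-respiration BVP at rate r₁ and (w₀, w₁) solves it at rate r₂, then D·(v₀'(0) + v₁'(0)) < D·(w₀'(0) + w₁'(0)). -/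
/-!
The total `s = v₀ + v₁` has zero second derivative and vanishes at `0`, so `s = m x` with
`m = v₀'(0) + v₁'(0)`. The combination `u = (1 - ρ) v₀ - ρ v₁` solves `u'' = k² u` with
`k = √(r / D)` and `u(0) = 0`, so its Wronskian with `sinh (k x)` gives
`k u cosh (k x) = u' sinh (k x)`. Evaluating at `L` with the boundary conditions yields
`m (ρ L + (1 - ρ) tanh (k L) / k) = ρ c`, and `t ↦ tanh t / t` is strictly decreasing on `(0, ∞)`.
-/

open Set Real

namespace Real

theorem strictAntiOn_tanh_div_self : StrictAntiOn (fun t => tanh t / t) (Ioi 0) := by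
  have hform : ∀ t, tanh t / t = sinh t / (t * cosh t) := fun t => by
    rw [tanh_eq_sinh_div_cosh, div_div, mul_comm]
  simp only [hform]
  refine strictAntiOn_of_deriv_neg (convex_Ioi 0) ?_ fun t ht => ?_
  · exact continuous_sinh.continuousOn.div (continuous_id.mul continuous_cosh).continuousOn
      fun t ht => (mul_pos ht (cosh_pos t)).ne'
  rw [interior_Ioi] at ht
  have ht : 0 < t := ht
  have hder : HasDerivAt (fun t => sinh t / (t * cosh t))
      ((cosh t * (t * cosh t) - sinh t * (1 * cosh t + t * sinh t)) / (t * cosh t) ^ 2) t :=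
    (hasDerivAt_sinh t).div ((hasDerivAt_id t).mul (hasDerivAt_cosh t)) (mul_pos ht (cosh_pos t)).ne'
  rw [hder.deriv]
  refine div_neg_of_neg_of_pos ?_ (by positivity)
  -- the numerator equals `t - sinh t * cosh t`
  nlinarith [self_lt_sinh_iff.mpr ht, one_le_cosh t, cosh_sq_sub_sinh_sq t, sinh_pos_iff.mpr ht]

theorem strictAntiOn_tanh_mul_div {L : ℝ} (hL : 0 < L) :
    StrictAntiOn (fun k => tanh (k * L) / k) (Ioi 0) := fun k₁ hk₁ k₂ hk₂ hk => by
  have hk₁' : k₁ ≠ 0 := ne_of_gt hk₁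
  have hk₂' : k₂ ≠ 0 := ne_of_gt hk₂
  calc tanh (k₂ * L) / k₂ = L * (tanh (k₂ * L) / (k₂ * L)) := by field_simp
    _ < L * (tanh (k₁ * L) / (k₁ * L)) := mul_lt_mul_of_pos_left
        (strictAntiOn_tanh_div_self (mul_pos hk₁ hL) (mul_pos hk₂ hL)
          (mul_lt_mul_of_pos_right hk hL)) hL
    _ = tanh (k₁ * L) / k₁ := by field_simp

end Real

theorem eq_of_forall_hasDerivAt_zero_Icc {f : ℝ → ℝ} {a b : ℝ}
    (hf : ∀ x ∈ Icc a b, HasDerivAt f 0 x) : ∀ x ∈ Icc a b, f x = f a :=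
  constant_of_has_deriv_right_zero (fun x hx => (hf x hx).continuousAt.continuousWithinAt)
    fun x hx => (hf x (Ico_subset_Icc_self hx)).hasDerivWithinAt

theorem eq_add_mul_of_hasDerivAt_of_hasDerivAt_zero {f f' : ℝ → ℝ} {a b : ℝ}
    (hf : ∀ x ∈ Icc a b, HasDerivAt f (f' x) x) (hf' : ∀ x ∈ Icc a b, HasDerivAt f' 0 x) :
    ∀ x ∈ Icc a b, f' x = f' a ∧ f x = f a + f' a * (x - a) := by
  have hconst := eq_of_forall_hasDerivAt_zero_Icc hf'
  have hlin : ∀ x ∈ Icc a b, HasDerivAt (fun y => f y - f' a * (y - a)) 0 x := fun x hx => by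
    refine ((hf x hx).sub (((hasDerivAt_id x).sub_const a).const_mul (f' a))).congr_deriv ?_
    rw [hconst x hx, mul_one, sub_self]
  intro x hx
  refine ⟨hconst x hx, ?_⟩
  linarith [eq_of_forall_hasDerivAt_zero_Icc hlin x hx]

theorem mul_cosh_sub_mul_sinh_eq {u u' : ℝ → ℝ} {k L : ℝ}
    (hu : ∀ x ∈ Icc 0 L, HasDerivAt u (u' x) x)
    (hu' : ∀ x ∈ Icc 0 L, HasDerivAt u' (k ^ 2 * u x) x) :
    ∀ x ∈ Icc 0 L, k * u x * cosh (k * x) - u' x * sinh (k * x) = k * u 0 := by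
  have hW : ∀ x ∈ Icc 0 L,
      HasDerivAt (fun y => k * u y * cosh (k * y) - u' y * sinh (k * y)) 0 x := fun x hx => by
    have hkx := (hasDerivAt_id x).const_mul k
    refine ((((hu x hx).const_mul k).mul ((hasDerivAt_cosh _).comp x hkx)).sub
      ((hu' x hx).mul ((hasDerivAt_sinh _).comp x hkx))).congr_deriv ?_
    simp only [Function.comp_apply, id]
    ring
  simpa using eq_of_forall_hasDerivAt_zero_Icc hW

theorem ContDiffOn.hasDerivAt_deriv_of_isOpen {f : ℝ → ℝ} {s : Set ℝ} (hf : ContDiffOn ℝ 2 f s)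
    (hs : IsOpen s) {x : ℝ} (hx : x ∈ s) :
    HasDerivAt f (deriv f x) x ∧ HasDerivAt (deriv f) (deriv (deriv f) x) x :=
  ⟨((hf.differentiableOn two_ne_zero).differentiableAt (hs.mem_nhds hx)).hasDerivAt,
    (((hf.deriv_of_isOpen hs (by norm_num : (1 : WithTop ℕ∞) + 1 ≤ 2)).differentiableOn
      one_ne_zero).differentiableAt (hs.mem_nhds hx)).hasDerivAt⟩

theorem insect_flux_mul_eq {L D c ρ r k : ℝ} {s : Set ℝ} {v₀ v₁ : ℝ → ℝ}
    (hL : 0 ≤ L) (hD : D ≠ 0) (hk : k ≠ 0) (hkr : D * k ^ 2 = r)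
    (hs : IsOpen s) (hLs : Icc 0 L ⊆ s) (hv₀ : ContDiffOn ℝ 2 v₀ s) (hv₁ : ContDiffOn ℝ 2 v₁ s)
    (hode₀ : ∀ x ∈ Icc 0 L, D * deriv (deriv v₀) x = (1 - ρ) * r * v₀ x - ρ * r * v₁ x)
    (hode₁ : ∀ x ∈ Icc 0 L, D * deriv (deriv v₁) x = ρ * r * v₁ x - (1 - ρ) * r * v₀ x)
    (hbc₀ : v₀ 0 = 0) (hbc₁ : v₁ 0 = 0) (hbc₂ : deriv v₁ L = 0) (hbc₃ : v₀ L = ρ * c) :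
    (deriv v₀ 0 + deriv v₁ 0) * (ρ * L + (1 - ρ) * (tanh (k * L) / k)) = ρ * c := by
  have hd₀ := fun x (hx : x ∈ Icc 0 L) => hv₀.hasDerivAt_deriv_of_isOpen hs (hLs hx)
  have hd₁ := fun x (hx : x ∈ Icc 0 L) => hv₁.hasDerivAt_deriv_of_isOpen hs (hLs hx)
  obtain ⟨hsum', hsum⟩ := eq_add_mul_of_hasDerivAt_of_hasDerivAt_zero
    (f := fun x => v₀ x + v₁ x) (f' := fun x => deriv v₀ x + deriv v₁ x)
    (fun x hx => (hd₀ x hx).1.add (hd₁ x hx).1)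
    (fun x hx => ((hd₀ x hx).2.add (hd₁ x hx).2).congr_deriv
      (mul_left_cancel₀ hD (by linear_combination hode₀ x hx + hode₁ x hx)))
    L ⟨hL, le_rfl⟩
  have hW := mul_cosh_sub_mul_sinh_eq (k := k)
    (u := fun x => (1 - ρ) * v₀ x - ρ * v₁ x) (u' := fun x => (1 - ρ) * deriv v₀ x - ρ * deriv v₁ x)
    (fun x hx => ((hd₀ x hx).1.const_mul _).sub ((hd₁ x hx).1.const_mul _))
    (fun x hx => (((hd₀ x hx).2.const_mul _).sub ((hd₁ x hx).2.const_mul _)).congr_deriv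
      (mul_left_cancel₀ hD (by linear_combination (1 - ρ) * hode₀ x hx - ρ * hode₁ x hx
        - ((1 - ρ) * v₀ x - ρ * v₁ x) * hkr)))
    L ⟨hL, le_rfl⟩
  simp only [hbc₀, hbc₁, sub_zero, mul_zero, add_zero, zero_add] at hsum' hsum hW
  have hC : cosh (k * L) ≠ 0 := (cosh_pos _).ne'
  rw [tanh_eq_sinh_div_cosh]
  generalize cosh (k * L) = C, sinh (k * L) = S at hW hC ⊢
  field_simp
  linear_combination (-1) * hW + k * C * hbc₃ - k * C * ρ * hsum - S * (1 - ρ) * hsum'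
    + S * hbc₂

/-- The steady-state mean oxygen flux of the insect-respiration model is
strictly increasing in the total switching rate. -/
theorem insect_flux_strict_mono
    (L D c ρ : ℝ) (hL : 0 < L) (hD : 0 < D) (hc : 0 < c) (hρ : ρ ∈ Set.Ioo (0:ℝ) 1)
    (r₁ r₂ : ℝ) (hr₁ : 0 < r₁) (hr₁₂ : r₁ < r₂)
    (v₀ v₁ w₀ w₁ : ℝ → ℝ)
    (a b : ℝ) (ha : a < 0) (hb : L < b)
    (hregv0 : ContDiffOn ℝ 2 v₀ (Set.Ioo a b))
    (hregv1 : ContDiffOn ℝ 2 v₁ (Set.Ioo a b))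
    (hregw0 : ContDiffOn ℝ 2 w₀ (Set.Ioo a b))
    (hregw1 : ContDiffOn ℝ 2 w₁ (Set.Ioo a b))
    (hodev0 : ∀ x ∈ Set.Icc (0:ℝ) L,
      D * deriv (deriv v₀) x = (1 - ρ) * r₁ * v₀ x - ρ * r₁ * v₁ x)
    (hodev1 : ∀ x ∈ Set.Icc (0:ℝ) L,
      D * deriv (deriv v₁) x = ρ * r₁ * v₁ x - (1 - ρ) * r₁ * v₀ x)
    (hodew0 : ∀ x ∈ Set.Icc (0:ℝ) L,
      D * deriv (deriv w₀) x = (1 - ρ) * r₂ * w₀ x - ρ * r₂ * w₁ x)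
    (hodew1 : ∀ x ∈ Set.Icc (0:ℝ) L,
      D * deriv (deriv w₁) x = ρ * r₂ * w₁ x - (1 - ρ) * r₂ * w₀ x)
    (hbcv0 : v₀ 0 = 0) (hbcv1 : v₁ 0 = 0)
    (hbcv2 : deriv v₁ L = 0) (hbcv3 : v₀ L = ρ * c)
    (hbcw0 : w₀ 0 = 0) (hbcw1 : w₁ 0 = 0)
    (hbcw2 : deriv w₁ L = 0) (hbcw3 : w₀ L = ρ * c) :
    D * (deriv v₀ 0 + deriv v₁ 0) < D * (deriv w₀ 0 + deriv w₁ 0) := by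
  obtain ⟨hρ₀, hρ₁⟩ := hρ
  have hr₂ : 0 < r₂ := hr₁.trans hr₁₂
  have hkr : ∀ r, 0 < r → D * √(r / D) ^ 2 = r := fun r hr => by
    rw [sq_sqrt (div_pos hr hD).le]
    field_simp
  set k₁ := √(r₁ / D)
  set k₂ := √(r₂ / D)
  have hk₁ : 0 < k₁ := sqrt_pos.2 (div_pos hr₁ hD)
  have hk₂ : 0 < k₂ := sqrt_pos.2 (div_pos hr₂ hD)
  have hflux₁ := insect_flux_mul_eq hL.le hD.ne' hk₁.ne' (hkr r₁ hr₁) isOpen_Ioo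
    (Icc_subset_Ioo ha hb) hregv0 hregv1 hodev0 hodev1 hbcv0 hbcv1 hbcv2 hbcv3
  have hflux₂ := insect_flux_mul_eq hL.le hD.ne' hk₂.ne' (hkr r₂ hr₂) isOpen_Ioo
    (Icc_subset_Ioo ha hb) hregw0 hregw1 hodew0 hodew1 hbcw0 hbcw1 hbcw2 hbcw3
  have htanh : tanh (k₂ * L) / k₂ < tanh (k₁ * L) / k₁ := strictAntiOn_tanh_mul_div hL hk₁ hk₂
    (sqrt_lt_sqrt (div_pos hr₁ hD).le (div_lt_div_of_pos_right hr₁₂ hD))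
  have htanh₂ : 0 < tanh (k₂ * L) / k₂ := by
    rw [tanh_eq_sinh_div_cosh]
    have := sinh_pos_iff.2 (mul_pos hk₂ hL)
    positivity
  have hP₂ : 0 < ρ * L + (1 - ρ) * (tanh (k₂ * L) / k₂) := by positivity
  have hP : ρ * L + (1 - ρ) * (tanh (k₂ * L) / k₂) < ρ * L + (1 - ρ) * (tanh (k₁ * L) / k₁) := by
    gcongr
  rw [← eq_div_iff_mul_eq (hP₂.trans hP).ne'] at hflux₁
  rw [← eq_div_iff_mul_eq hP₂.ne'] at hflux₂
  rw [hflux₁, hflux₂]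
  gcongr
end
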